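/- arXiv:math/0103219 — 5 statements merged into one kernel-verified Lean document; each statement's English description precedes it below -/
import Mathlib

section
/- Let Σ be a locally finite abstract simplicial complex and X a topological space. A map g : |Σ| → X is continuous if and only if for every simplex Δ ∈ Σ the restriction of g to |Δ| is continuous. -/
/-- `K` is an abstract simplicial complex on the vertex type `V`: a set of nonempty
finite subsets of `V` closed under passing to nonempty subsets. -/
def IsSimplicialComplex {V : Type*} (K : Set (Finset V)) : Prop :=
  ∀ S ∈ K, S.Nonempty ∧ ∀ E : Finset V, E ⊆ S → E.Nonempty → E ∈ K

/-- `K` is locally finite: every vertex belongs to only finitely many simplexes. -/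
def IsLocallyFiniteComplex {V : Type*} (K : Set (Finset V)) : Prop :=
  ∀ v : V, {S ∈ K | v ∈ S}.Finite

/-- The geometric realization `|K|` of an abstract simplicial complex `K`: the set of
functions `f : V → ℝ` which are nonnegative, whose support is (the coercion of) a
simplex of `K`, and whose values sum to `1`.  As a subtype of `V → ℝ` it carries the
topology of pointwise convergence. -/
def Realization {V : Type*} (K : Set (Finset V)) : Set (V → ℝ) :=
  {f | (∀ v, 0 ≤ f v) ∧ (∃ S ∈ K, Function.support f = ↑S) ∧ ∑ᶠ v, f v = 1}

/-!
Near a point `x` of `|K|` pick a vertex `v` with `x v ≠ 0`. On the open neighbourhood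
`{f | f v ≠ 0}` the realization is covered by the `|Δ|` with `v ∈ Δ`, of which there are
finitely many by local finiteness. Each `|Δ|` is closed in `|K|`, so `g` is continuous within
`|Δ|` at `x` whether or not `x ∈ |Δ|`, and continuity within a finite union follows.
-/

open Filter Topology Function

lemma continuousWithinAt_biUnion_of_finite {α β ι : Type*} [TopologicalSpace α]
    [TopologicalSpace β] {f : α → β} {x : α} {I : Set ι} (hI : I.Finite) {s : ι → Set α}
    (h : ∀ i ∈ I, ContinuousWithinAt f (s i) x) :
    ContinuousWithinAt f (⋃ i ∈ I, s i) x := by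
  rw [ContinuousWithinAt, nhdsWithin_biUnion hI]
  exact tendsto_iSup.2 fun i => tendsto_iSup.2 (h i)

lemma ContinuousOn.continuousWithinAt_inter_of_isClosed {α β : Type*} [TopologicalSpace α]
    [TopologicalSpace β] {f : α → β} {s t : Set α} {x : α} (hf : ContinuousOn f (s ∩ t))
    (ht : IsClosed t) (hx : x ∈ s) : ContinuousWithinAt f (s ∩ t) x := by
  by_cases hxt : x ∈ t
  · exact hf x ⟨hx, hxt⟩
  · exact continuousWithinAt_of_notMem_closure fun hcl =>
      hxt (ht.closure_subset (closure_mono Set.inter_subset_right hcl))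

lemma isClosed_setOf_support_subset {ι M : Type*} [TopologicalSpace M] [Zero M] [T1Space M]
    (s : Set ι) : IsClosed {f : ι → M | support f ⊆ s} := by
  simp only [support_subset_iff', Set.ofPred_forall]
  exact isClosed_iInter fun i => isClosed_iInter fun _ =>
    isClosed_singleton.preimage (continuous_apply i)

section Realization

variable {V : Type*} {K : Set (Finset V)}

lemma exists_ne_zero_of_mem_realization {f : V → ℝ} (hf : f ∈ Realization K) :
    ∃ v, f v ≠ 0 := by
  by_contra! hzero
  have hsum := hf.2.2
  simp [funext hzero] at hsum

lemma realization_inter_subset_biUnion (v : V) :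
    Realization K ∩ {f | f v ≠ 0} ⊆
      ⋃ Δ ∈ {S ∈ K | v ∈ S}, Realization K ∩ {f | support f ⊆ ↑Δ} := by
  rintro f ⟨hf, hfv⟩
  obtain ⟨Δ, hΔ, hsupp⟩ := hf.2.1
  have hvΔ : v ∈ Δ := by exact_mod_cast hsupp ▸ mem_support.2 hfv
  exact Set.mem_biUnion ⟨hΔ, hvΔ⟩ ⟨hf, hsupp.le⟩

end Realization

theorem realization_continuous_iff_continuousOn_simplexes_general {V : Type*}
    (K : Set (Finset V)) (hlf : IsLocallyFiniteComplex K)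
    {X : Type*} [TopologicalSpace X] (g : (V → ℝ) → X) :
    ContinuousOn g (Realization K) ↔
      ∀ Δ ∈ K, ContinuousOn g {f ∈ Realization K | Function.support f ⊆ ↑Δ} := by
  refine ⟨fun h Δ _ => h.mono fun f hf => hf.1, fun h x hx => ?_⟩
  obtain ⟨v, hv⟩ := exists_ne_zero_of_mem_realization hx
  have hnhds : {f : V → ℝ | f v ≠ 0} ∈ 𝓝 x :=
    (isOpen_ne_fun (continuous_apply v) continuous_const).mem_nhds hv
  have hcover : ContinuousWithinAt g
      (⋃ Δ ∈ {S ∈ K | v ∈ S}, Realization K ∩ {f | support f ⊆ ↑Δ}) x :=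
    continuousWithinAt_biUnion_of_finite (hlf v) fun Δ hΔ =>
      (h Δ hΔ.1).continuousWithinAt_inter_of_isClosed (isClosed_setOf_support_subset _) hx
  exact (continuousWithinAt_inter hnhds).1 (hcover.mono (realization_inter_subset_biUnion v))

/-- For a locally finite abstract simplicial complex `K` and a topological space `X`,
a map `g : |K| → X` is continuous if and only if its restriction to the subspace
`|Δ| = {f ∈ |K| : support f ⊆ Δ}` is continuous for every simplex `Δ ∈ K`.
(Continuity of the restriction to a subspace is expressed via `ContinuousOn`.) -/
theorem realization_continuous_iff_continuousOn_simplexes {V : Type*}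
    (K : Set (Finset V)) (hK : IsSimplicialComplex K) (hlf : IsLocallyFiniteComplex K)
    {X : Type*} [TopologicalSpace X] (g : (V → ℝ) → X) :
    ContinuousOn g (Realization K) ↔
      ∀ Δ ∈ K, ContinuousOn g {f ∈ Realization K | Function.support f ⊆ ↑Δ} :=
  realization_continuous_iff_continuousOn_simplexes_general K hlf g
end

section
/- Let Σ be a locally finite abstract simplicial complex on the vertex type V. For each s ∈ V, the coordinate function h_s : |Σ| → ℂ defined by h_s(f) = f(s) is continuous and vanishes at infinity, and the non-unital star subalgebra of C₀(|Σ|, ℂ) generated by the family {h_s : s ∈ V} is dense in C₀(|Σ|, ℂ). (This is the content of Proposition 2.1, identifying the abelianized simplicial complex algebra C_Σ^{ab} with C₀(|Σ|).) -/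
namespace SimplicialC0Aux

open Set Function Filter Topology ZeroAtInfty

variable {V : Type*} {K : Set (Finset V)}

lemma sum_eq_one_of_support_subset {f : V → ℝ} (hf : f ∈ Realization K) {T : Finset V}
    (hT : Function.support f ⊆ ↑T) : ∑ v ∈ T, f v = 1 := by
  rw [← finsum_eq_sum_of_support_subset f hT]
  exact hf.2.2

lemma sum_le_one {f : V → ℝ} (hf : f ∈ Realization K) (F : Finset V) :
    ∑ v ∈ F, f v ≤ 1 := by
  classical
  obtain ⟨S, hS, hsupp⟩ := hf.2.1
  have h1 : ∑ v ∈ F ∪ S, f v = 1 := by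
    refine sum_eq_one_of_support_subset hf ?_
    rw [hsupp]
    exact fun x hx => Finset.mem_coe.mpr (Finset.mem_union_right _ (Finset.mem_coe.mp hx))
  calc ∑ v ∈ F, f v ≤ ∑ v ∈ F ∪ S, f v :=
        Finset.sum_le_sum_of_subset_of_nonneg Finset.subset_union_left (fun i _ _ => hf.1 i)
    _ = 1 := h1

lemma isCompact_supportedIn (hK : IsSimplicialComplex K) (T : Finset V) :
    IsCompact {x : Realization K | Function.support (x : V → ℝ) ⊆ ↑T} := by
  classical
  set D : Set (V → ℝ) := {f | f ∈ Realization K ∧ Function.support f ⊆ ↑T} with hD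
  have hDclosed : IsClosed D := by
    have key : D = ⋃ S ∈ {S : Finset V | S ∈ K ∧ S ⊆ T},
        ((⋂ v, {f : V → ℝ | 0 ≤ f v}) ∩
          ((⋂ v ∈ (↑S : Set V)ᶜ, {f : V → ℝ | f v = 0}) ∩
            {f : V → ℝ | ∑ v ∈ T, f v = 1})) := by
      ext f
      simp only [hD, mem_setOf_eq, mem_iUnion, mem_inter_iff, mem_iInter, exists_prop,
        mem_compl_iff]
      constructor
      · rintro ⟨hf, hT'⟩
        obtain ⟨S, hS, hsupp⟩ := hf.2.1
        have hST : S ⊆ T := by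
          intro v hv
          exact Finset.mem_coe.mp (hT' (by rw [hsupp]; exact Finset.mem_coe.mpr hv))
        refine ⟨S, ⟨hS, hST⟩, hf.1, ?_, sum_eq_one_of_support_subset hf hT'⟩
        intro v hv
        by_contra hfv
        exact hv (by rw [← hsupp]; exact hfv)
      · rintro ⟨S, ⟨hSK, hST⟩, hpos, hzero, hsum⟩
        have hsuppS : Function.support f ⊆ ↑S := by
          intro v hv
          by_contra hvS
          exact hv (hzero v hvS)
        have hsuppT : Function.support f ⊆ ↑T := hsuppS.trans (by exact_mod_cast hST)
        have hfin : (Function.support f).Finite := S.finite_toSet.subset hsuppS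
        have hsum1 : ∑ᶠ v, f v = 1 := by
          rw [finsum_eq_sum_of_support_subset f hsuppT]; exact hsum
        have hne : hfin.toFinset.Nonempty := by
          rw [Finset.nonempty_iff_ne_empty]
          intro h
          have : Function.support f = ∅ := by
            rw [← hfin.coe_toFinset, h]; simp
          have hf0 : f = fun _ => 0 := funext fun v => by
            by_contra hv
            exact absurd (this ▸ (mem_support.mpr hv)) (notMem_empty v)
          rw [hf0] at hsum1
          simp at hsum1
        have hEK : hfin.toFinset ∈ K := by
          refine (hK S hSK).2 _ ?_ hne
          intro v hv
          exact Finset.mem_coe.mp (hsuppS (hfin.mem_toFinset.mp hv))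
        exact ⟨⟨hpos, ⟨hfin.toFinset, hEK, hfin.coe_toFinset.symm⟩, hsum1⟩, hsuppT⟩
    rw [key]
    have hfin : {S : Finset V | S ∈ K ∧ S ⊆ T}.Finite := by
      refine Set.Finite.subset T.powerset.finite_toSet ?_
      intro S hS
      exact Finset.mem_coe.mpr (Finset.mem_powerset.mpr hS.2)
    refine hfin.isClosed_biUnion ?_
    intro S _
    refine IsClosed.inter (isClosed_iInter fun v => isClosed_le continuous_const
      (continuous_apply v)) (IsClosed.inter ?_ ?_)
    · exact isClosed_biInter fun v _ => isClosed_eq (continuous_apply v) continuous_const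
    · exact isClosed_eq (continuous_finset_sum _ fun v _ => continuous_apply v) continuous_const
  have hDsub : D ⊆ Set.pi univ (fun _ : V => Set.Icc (0 : ℝ) 1) := by
    intro f hf v _
    refine ⟨hf.1.1 v, ?_⟩
    calc f v = ∑ w ∈ {v}, f w := by simp
      _ ≤ 1 := sum_le_one hf.1 _
  have hDcp : IsCompact D :=
    (isCompact_univ_pi fun _ => isCompact_Icc).of_isClosed_subset hDclosed hDsub
  rw [Subtype.isCompact_iff]
  have himg : Subtype.val '' {x : Realization K | Function.support (x : V → ℝ) ⊆ ↑T} = D := by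
    ext f
    constructor
    · rintro ⟨x, hx, rfl⟩; exact ⟨x.2, hx⟩
    · rintro ⟨hf, hT'⟩; exact ⟨⟨f, hf⟩, hT', rfl⟩
  rw [himg]
  exact hDcp

/-- The (finite) set of vertices of simplexes containing `s`. -/
noncomputable def Tfin (hlf : IsLocallyFiniteComplex K) (s : V) : Finset V :=
  (Set.Finite.biUnion (hlf s) (fun S _ => S.finite_toSet)).toFinset

lemma support_subset_Tfin (hlf : IsLocallyFiniteComplex K) (s : V) (x : Realization K)
    (hx : (x : V → ℝ) s ≠ 0) : Function.support (x : V → ℝ) ⊆ ↑(Tfin hlf s) := by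
  obtain ⟨S, hS, hsupp⟩ := x.2.2.1
  have hsS : s ∈ S := by
    have : s ∈ Function.support (x : V → ℝ) := mem_support.mpr hx
    rwa [hsupp, Finset.mem_coe] at this
  intro v hv
  rw [hsupp, Finset.mem_coe] at hv
  rw [Finset.mem_coe, Tfin, Set.Finite.mem_toFinset]
  exact Set.mem_biUnion ⟨hS, hsS⟩ (Finset.mem_coe.mpr hv)

lemma apply_eq_zero_of_not_supported (hlf : IsLocallyFiniteComplex K) (s : V)
    (x : Realization K) (hx : ¬ Function.support (x : V → ℝ) ⊆ ↑(Tfin hlf s)) :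
    (x : V → ℝ) s = 0 := by
  by_contra h
  exact hx (support_subset_Tfin hlf s x h)

/-- The coordinate function `h_s` as an element of `C₀(|K|, ℂ)`. -/
noncomputable def coord (hK : IsSimplicialComplex K) (hlf : IsLocallyFiniteComplex K) (s : V) :
    C₀(Realization K, ℂ) where
  toFun := fun x => ((x : V → ℝ) s : ℂ)
  continuous_toFun :=
    Complex.continuous_ofReal.comp ((continuous_apply s).comp continuous_subtype_val)
  zero_at_infty' := by
    rw [tendsto_def]
    intro U hU
    rw [mem_cocompact]
    refine ⟨_, isCompact_supportedIn hK (Tfin hlf s), ?_⟩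
    intro x hx
    simp only [mem_compl_iff, mem_setOf_eq] at hx
    have h0 : (x : V → ℝ) s = 0 := apply_eq_zero_of_not_supported hlf s x hx
    simp only [mem_preimage, h0, Complex.ofReal_zero]
    exact mem_of_mem_nhds hU

lemma coord_apply (hK : IsSimplicialComplex K) (hlf : IsLocallyFiniteComplex K) (s : V)
    (x : Realization K) : coord hK hlf s x = ((x : V → ℝ) s : ℂ) := rfl

lemma c0_norm_apply_le {X : Type*} [TopologicalSpace X] (f : C₀(X, ℂ)) (x : X) :
    ‖f x‖ ≤ ‖f‖ := by
  rw [← ZeroAtInftyContinuousMap.norm_toBCF_eq_norm]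
  exact f.toBCF.norm_coe_le_norm x

lemma c0_norm_le {X : Type*} [TopologicalSpace X] (f : C₀(X, ℂ)) {c : ℝ} (hc : 0 ≤ c)
    (h : ∀ x, ‖f x‖ ≤ c) : ‖f‖ ≤ c := by
  rw [← ZeroAtInftyContinuousMap.norm_toBCF_eq_norm]
  exact (BoundedContinuousFunction.norm_le hc).mpr h

lemma c0_sum_apply {X : Type*} [TopologicalSpace X] {ι : Type*} (F : Finset ι)
    (a : ι → C₀(X, ℂ)) (x : X) : (∑ s ∈ F, a s) x = ∑ s ∈ F, a s x := by
  classical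
  induction F using Finset.cons_induction with
  | empty => simp
  | cons s F hs ih => rw [Finset.sum_cons, Finset.sum_cons, ← ih]; rfl

end SimplicialC0Aux

open Set Function Filter Topology SimplicialC0Aux

open ZeroAtInfty in
/-- For a locally finite abstract simplicial complex `K`, each coordinate function
`h_s : |K| → ℂ`, `h_s f = f s`, is a continuous function vanishing at infinity, and the
non-unital star subalgebra of `C₀(|K|, ℂ)` generated by the `h_s`, `s ∈ V`, is dense.
This identifies the abelianized simplicial complex algebra with `C₀(|K|)`. -/
theorem coordinate_functions_generate_C0 {V : Type*} (K : Set (Finset V))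
    (hK : IsSimplicialComplex K) (hlf : IsLocallyFiniteComplex K) :
    ∃ H : V → C₀(Realization K, ℂ),
      (∀ (s : V) (f : Realization K), H s f = ((f : V → ℝ) s : ℂ)) ∧
      Dense (↑(NonUnitalStarAlgebra.adjoin ℂ (Set.range H)) :
        Set C₀(Realization K, ℂ)) := by
  classical
  refine ⟨coord hK hlf, fun s f => rfl, ?_⟩
  set A := NonUnitalStarAlgebra.adjoin ℂ (Set.range (coord hK hlf)) with hA
  -- key approximation lemma for the pieces `e_s · g`
  have hcoordA : ∀ s : V, coord hK hlf s ∈ A :=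
    fun s => NonUnitalStarAlgebra.subset_adjoin ℂ _ ⟨s, rfl⟩
  have piece : ∀ (g : C₀(Realization K, ℂ)) (s : V) (δ : ℝ), 0 < δ →
      ∃ a ∈ A, ∀ x : Realization K,
        ‖a x - ((x : V → ℝ) s : ℂ) * g x‖ ≤ δ * (x : V → ℝ) s := by
    intro g s δ hδ
    set Cs : Set (Realization K) :=
      {x : Realization K | Function.support (x : V → ℝ) ⊆ ↑(Tfin hlf s)} with hCs
    have hCscp : IsCompact Cs := isCompact_supportedIn hK (Tfin hlf s)
    have : CompactSpace Cs := isCompact_iff_compactSpace.mp hCscp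
    -- the unital star subalgebra of C(Cs, ℂ) generated by restricted coordinates
    set B : StarSubalgebra ℂ C(Cs, ℂ) :=
      StarAlgebra.adjoin ℂ
        (Set.range fun v : V => ContinuousMap.restrict Cs (coord hK hlf v).toContinuousMap)
      with hB
    have hsep : B.SeparatesPoints := by
      intro x y hxy
      obtain ⟨v, hv⟩ : ∃ v, (x.1 : V → ℝ) v ≠ (y.1 : V → ℝ) v := by
        by_contra h
        push_neg at h
        exact hxy (Subtype.ext (Subtype.ext (funext h)))
      refine ⟨_, ⟨ContinuousMap.restrict Cs (coord hK hlf v).toContinuousMap,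
        StarAlgebra.subset_adjoin ℂ _ ⟨v, rfl⟩, rfl⟩, ?_⟩
      exact fun h => hv (Complex.ofReal_inj.mp h)
    have hBtop : B.topologicalClosure = ⊤ :=
      ContinuousMap.starSubalgebra_topologicalClosure_eq_top_of_separatesPoints B hsep
    -- approximate g on Cs by an element of B
    set g' : C(Cs, ℂ) := ContinuousMap.restrict Cs g.toContinuousMap with hg'
    have hg'mem : g' ∈ closure (B : Set C(Cs, ℂ)) := by
      have : g' ∈ B.topologicalClosure := hBtop ▸ trivial
      rwa [← SetLike.mem_coe, StarSubalgebra.topologicalClosure_coe] at this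
    obtain ⟨b, hbB, hbdist⟩ := Metric.mem_closure_iff.mp hg'mem δ hδ
    -- lift: multiply by elements of A vanishing off Cs
    have lift : ∀ b' ∈ B, ∀ a : C₀(Realization K, ℂ), a ∈ A →
        (∀ x : Realization K, x ∉ Cs → a x = 0) →
        ∃ a' ∈ A, (∀ x (hx : x ∈ Cs), a' x = a x * b' ⟨x, hx⟩) ∧
          (∀ x, x ∉ Cs → a' x = 0) := by
      intro b' hb'
      induction hb' using StarAlgebra.adjoin_induction with
      | mem f hf =>
        obtain ⟨v, rfl⟩ := hf
        intro a haA havan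
        refine ⟨a * coord hK hlf v, mul_mem haA (hcoordA v), fun x hx => rfl,
          fun x hx => ?_⟩
        show a x * coord hK hlf v x = 0
        rw [havan x hx, zero_mul]
      | algebraMap c =>
        intro a haA havan
        refine ⟨c • a, SMulMemClass.smul_mem c haA, fun x hx => ?_, fun x hx => ?_⟩
        · show c * a x = a x * _
          simp [mul_comm]
        · show c * a x = 0
          rw [havan x hx, mul_zero]
      | add f₁ f₂ hf₁ hf₂ ih₁ ih₂ =>
        intro a haA havan
        obtain ⟨a₁, ha₁A, ha₁, ha₁v⟩ := ih₁ a haA havan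
        obtain ⟨a₂, ha₂A, ha₂, ha₂v⟩ := ih₂ a haA havan
        refine ⟨a₁ + a₂, add_mem ha₁A ha₂A, fun x hx => ?_, fun x hx => ?_⟩
        · show a₁ x + a₂ x = a x * (f₁ ⟨x, hx⟩ + f₂ ⟨x, hx⟩)
          rw [ha₁ x hx, ha₂ x hx, mul_add]
        · show a₁ x + a₂ x = 0
          rw [ha₁v x hx, ha₂v x hx, add_zero]
      | mul f₁ f₂ hf₁ hf₂ ih₁ ih₂ =>
        intro a haA havan
        obtain ⟨a₁, ha₁A, ha₁, ha₁v⟩ := ih₁ a haA havan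
        obtain ⟨a₂, ha₂A, ha₂, ha₂v⟩ := ih₂ a₁ ha₁A ha₁v
        refine ⟨a₂, ha₂A, fun x hx => ?_, ha₂v⟩
        rw [ha₂ x hx, ha₁ x hx]
        show a x * f₁ ⟨x, hx⟩ * f₂ ⟨x, hx⟩ = a x * (f₁ ⟨x, hx⟩ * f₂ ⟨x, hx⟩)
        ring
      | star f hf ih =>
        intro a haA havan
        obtain ⟨a₁, ha₁A, ha₁, ha₁v⟩ := ih (star a) (star_mem haA)
          (fun x hx => by
            show star (a x) = 0
            rw [havan x hx, star_zero])
        refine ⟨star a₁, star_mem ha₁A, fun x hx => ?_, fun x hx => ?_⟩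
        · show star (a₁ x) = a x * star (f ⟨x, hx⟩)
          rw [ha₁ x hx]
          show star (star (a x) * f ⟨x, hx⟩) = _
          simp [mul_comm]
        · show star (a₁ x) = 0
          rw [ha₁v x hx, star_zero]
    obtain ⟨a', ha'A, ha'eq, ha'van⟩ := lift b hbB (coord hK hlf s) (hcoordA s)
      (fun x hx => by
        show ((x : V → ℝ) s : ℂ) = 0
        exact_mod_cast apply_eq_zero_of_not_supported hlf s x hx)
    refine ⟨a', ha'A, fun x => ?_⟩
    by_cases hx : x ∈ Cs
    · rw [ha'eq x hx]
      have : coord hK hlf s x * b ⟨x, hx⟩ - ((x : V → ℝ) s : ℂ) * g x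
          = ((x : V → ℝ) s : ℂ) * (b ⟨x, hx⟩ - g' ⟨x, hx⟩) := by
        rw [coord_apply]
        show _ = _ * (b ⟨x, hx⟩ - g x)
        ring
      rw [this, norm_mul, Complex.norm_real, Real.norm_eq_abs, abs_of_nonneg (x.2.1 s), mul_comm]
      refine mul_le_mul_of_nonneg_right ?_ (x.2.1 s)
      calc ‖b ⟨x, hx⟩ - g' ⟨x, hx⟩‖ = ‖(b - g') ⟨x, hx⟩‖ := by rw [ContinuousMap.sub_apply]
        _ ≤ ‖b - g'‖ := (b - g').norm_coe_le_norm _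
        _ = dist g' b := by rw [dist_eq_norm, norm_sub_rev]
        _ ≤ δ := le_of_lt hbdist
    · have h0 : (x : V → ℝ) s = 0 := by
        by_contra h
        exact hx (support_subset_Tfin hlf s x h)
      rw [ha'van x hx, h0]
      simp
  -- now prove density
  rw [Metric.dense_iff]
  intro g ε hε
  have hg0 : (0 : ℝ) ≤ ‖g‖ := norm_nonneg g
  have hε3 : (0 : ℝ) < ε / 3 := by linarith
  -- compact set outside which g is small
  obtain ⟨C, hCcp, hCsub⟩ := mem_cocompact.mp (g.zero_at_infty' (Metric.ball_mem_nhds 0 hε3))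
  have hCsmall : ∀ x : Realization K, x ∉ C → ‖g x‖ < ε / 3 := by
    intro x hx
    have := hCsub hx
    rwa [mem_preimage, mem_ball_zero_iff] at this
  set δ : ℝ := (ε / 3) / (‖g‖ + 1) with hδdef
  have hδpos : 0 < δ := div_pos hε3 (by linarith)
  -- a finite set of vertices whose coordinates sum close to 1 on C
  obtain ⟨F, hF⟩ : ∃ F : Finset V, ∀ x ∈ C, 1 - δ < ∑ v ∈ F, (x : V → ℝ) v := by
    have hopen : ∀ F : Finset V,
        IsOpen {x : Realization K | 1 - δ < ∑ v ∈ F, (x : V → ℝ) v} := fun F =>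
      isOpen_lt continuous_const
        (continuous_finset_sum _ fun v _ => (continuous_apply v).comp continuous_subtype_val)
    have hcover : C ⊆ ⋃ F : Finset V, {x : Realization K | 1 - δ < ∑ v ∈ F, (x : V → ℝ) v} := by
      intro x _
      obtain ⟨S, hS, hsupp⟩ := x.2.2.1
      refine mem_iUnion.mpr ⟨S, ?_⟩
      have h1 : ∑ v ∈ S, (x : V → ℝ) v = 1 :=
        sum_eq_one_of_support_subset x.2 (by rw [hsupp])
      simp only [mem_setOf_eq, h1]
      linarith
    obtain ⟨t, ht⟩ := hCcp.elim_finite_subcover _ hopen hcover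
    refine ⟨t.sup id, fun x hx => ?_⟩
    obtain ⟨F, hFt, hxF⟩ := mem_iUnion₂.mp (ht hx)
    calc 1 - δ < ∑ v ∈ F, (x : V → ℝ) v := hxF
      _ ≤ ∑ v ∈ t.sup id, (x : V → ℝ) v :=
        Finset.sum_le_sum_of_subset_of_nonneg (Finset.le_sup (f := id) hFt)
          (fun v _ _ => x.2.1 v)
  -- choose approximants for each coordinate
  have hpieces : ∀ s : V, ∃ a ∈ A, ∀ x : Realization K,
      ‖a x - ((x : V → ℝ) s : ℂ) * g x‖ ≤ (ε / 3) * (x : V → ℝ) s :=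
    fun s => piece g s (ε / 3) hε3
  choose a haA habound using hpieces
  refine ⟨∑ s ∈ F, a s, ?_, sum_mem fun s _ => haA s⟩
  rw [Metric.mem_ball, dist_eq_norm, norm_sub_rev]
  have key : ∀ x : Realization K, ‖(g - ∑ s ∈ F, a s) x‖ ≤ 2 * ε / 3 := by
    intro x
    set σ : ℝ := ∑ v ∈ F, (x : V → ℝ) v with hσ
    have hσ0 : 0 ≤ σ := Finset.sum_nonneg fun v _ => x.2.1 v
    have hσ1 : σ ≤ 1 := sum_le_one x.2 F
    have expand : (g - ∑ s ∈ F, a s) x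
        = (g x - (σ : ℂ) * g x) + ∑ s ∈ F, (((x : V → ℝ) s : ℂ) * g x - a s x) := by
      show g x - (∑ s ∈ F, a s) x = _
      rw [c0_sum_apply, Finset.sum_sub_distrib, ← Finset.sum_mul, hσ]
      push_cast
      ring
    rw [expand]
    refine (norm_add_le _ _).trans ?_
    have h1 : ‖g x - (σ : ℂ) * g x‖ ≤ ε / 3 := by
      have heq : g x - (σ : ℂ) * g x = ((1 - σ : ℝ) : ℂ) * g x := by push_cast; ring
      rw [heq, norm_mul, Complex.norm_real, Real.norm_eq_abs, abs_of_nonneg (by linarith)]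
      by_cases hxC : x ∈ C
      · have hlt : 1 - σ < δ := by have := hF x hxC; linarith
        have hgx : ‖g x‖ ≤ ‖g‖ := c0_norm_apply_le g x
        have hδg : δ * ‖g‖ ≤ ε / 3 := by
          rw [hδdef, div_mul_eq_mul_div, div_le_iff₀ (by linarith : (0:ℝ) < ‖g‖ + 1)]
          nlinarith
        nlinarith [norm_nonneg (g x)]
      · have := hCsmall x hxC
        nlinarith [norm_nonneg (g x)]
    have h2 : ‖∑ s ∈ F, (((x : V → ℝ) s : ℂ) * g x - a s x)‖ ≤ ε / 3 := by
      refine (norm_sum_le _ _).trans ?_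
      calc ∑ s ∈ F, ‖((x : V → ℝ) s : ℂ) * g x - a s x‖
          ≤ ∑ s ∈ F, (ε / 3) * (x : V → ℝ) s := by
            refine Finset.sum_le_sum fun s _ => ?_
            rw [norm_sub_rev]
            exact habound s x
        _ = (ε / 3) * σ := by rw [hσ, Finset.mul_sum]
        _ ≤ ε / 3 := by nlinarith
    linarith
  have : ‖g - ∑ s ∈ F, a s‖ ≤ 2 * ε / 3 := c0_norm_le _ (by linarith) key
  linarith
end

section
/- If Σ is a locally finite abstract simplicial complex, then every compact subset of |Σ| is contained in the union of finitely many of the subspaces |Δ|, Δ ∈ Σ. -/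
/-- In the geometric realization of a locally finite abstract simplicial complex, every
compact subset is contained in the union of finitely many of the subspaces
`|Δ| = {f ∈ |K| : support f ⊆ Δ}`, `Δ ∈ K`. -/
theorem compact_subset_finite_union_simplexes {V : Type*} (K : Set (Finset V))
    (hK : IsSimplicialComplex K) (hlf : IsLocallyFiniteComplex K)
    (C : Set (V → ℝ)) (hC : C ⊆ Realization K) (hcomp : IsCompact C) :
    ∃ T : Finset (Finset V), ↑T ⊆ K ∧
      C ⊆ ⋃ Δ ∈ T, {f ∈ Realization K | Function.support f ⊆ ↑Δ} := by
  classical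
  set U : V → Set (V → ℝ) := fun v => {g | 0 < g v} with hU
  have hUopen : ∀ v, IsOpen (U v) := fun v =>
    isOpen_lt continuous_const (continuous_apply v)
  have hcover : C ⊆ ⋃ v, U v := by
    intro f hf
    obtain ⟨hpos, ⟨S, hS, hsupp⟩, -⟩ := hC hf
    obtain ⟨v, hv⟩ := (hK S hS).1
    have hvs : f v ≠ 0 := by
      have : v ∈ Function.support f := by rw [hsupp]; exact_mod_cast hv
      exact this
    exact Set.mem_iUnion.2 ⟨v, lt_of_le_of_ne (hpos v) (Ne.symm hvs)⟩
  obtain ⟨t, ht⟩ := hcomp.elim_finite_subcover U hUopen hcover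
  have hfin : (⋃ v ∈ t, {S ∈ K | v ∈ S}).Finite :=
    Set.Finite.biUnion t.finite_toSet (fun v _ => hlf v)
  refine ⟨hfin.toFinset, ?_, ?_⟩
  · intro S h
    simp only [Set.Finite.coe_toFinset, Set.mem_iUnion, Set.mem_setOf_eq] at h
    obtain ⟨v, -, hSK, -⟩ := h
    exact hSK
  · intro g hg
    obtain ⟨hpos, ⟨S, hS, hsupp⟩, -⟩ := hC hg
    obtain ⟨v, hvt, hv⟩ := Set.mem_iUnion₂.1 (ht hg)
    have hvS : v ∈ S := by
      have : v ∈ Function.support g := ne_of_gt hv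
      rwa [hsupp] at this
    have hST : S ∈ hfin.toFinset := by
      simp only [Set.Finite.mem_toFinset, Set.mem_iUnion, Set.mem_setOf_eq]
      exact ⟨v, hvt, hS, hvS⟩
    exact Set.mem_biUnion hST ⟨hC hg, hsupp.le⟩
end

section
/- Let Γ act on |Σ_F| by (g • f)(t) = f(g⁻¹t) for g, t ∈ Γ. Then each g ∈ Γ acts as a homeomorphism of |Σ_F|, and for every compact subset K of |Σ_F| the set {g ∈ Γ : (g • K) ∩ K ≠ ∅} is finite; that is, the action of Γ on |Σ_F| is proper. (|Σ_F| is the proper Γ-space E_F appearing in the definition of the Baum–Connes assembly map.) -/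
/-- For a group `Γ` and a finite subset `F ⊆ Γ`, `SigmaF F` is the abstract simplicial
complex (on the vertex type `Γ`) of all nonempty finite subsets `S ⊆ Γ` such that
`s⁻¹ * t ∈ F` for all `s, t ∈ S`. -/
def SigmaF {Γ : Type*} [Group Γ] (F : Finset Γ) : Set (Finset Γ) :=
  {S | S.Nonempty ∧ ∀ s ∈ S, ∀ t ∈ S, s⁻¹ * t ∈ F}

lemma smul_mem_realization {Γ : Type*} [Group Γ] (F : Finset Γ) (g : Γ)
    {f : Γ → ℝ} (hf : f ∈ Realization (SigmaF F)) :
    (fun t => f (g⁻¹ * t)) ∈ Realization (SigmaF F) := by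
  classical
  obtain ⟨hnn, ⟨S, ⟨hSne, hSF⟩, hsupp⟩, hsum⟩ := hf
  refine ⟨fun t => hnn _, ⟨S.image (fun s => g * s), ⟨hSne.image _, ?_⟩, ?_⟩, ?_⟩
  · intro s hs t ht
    simp only [Finset.mem_image] at hs ht
    obtain ⟨a, ha, rfl⟩ := hs; obtain ⟨b, hb, rfl⟩ := ht
    have h : (g * a)⁻¹ * (g * b) = a⁻¹ * b := by group
    rw [h]; exact hSF a ha b hb
  · ext t
    simp only [Function.mem_support, Finset.coe_image, Set.mem_image, Finset.mem_coe]
    constructor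
    · intro h
      refine ⟨g⁻¹ * t, ?_, by group⟩
      have : g⁻¹ * t ∈ Function.support f := h
      rwa [hsupp] at this
    · rintro ⟨a, ha, rfl⟩
      have : a ∈ Function.support f := by rw [hsupp]; exact ha
      simpa using this
  · rw [← hsum]
    exact finsum_comp_equiv (Equiv.mulLeft g⁻¹)

/-- Let `Γ` act on `|Σ_F|` by `(g • f) t = f (g⁻¹ t)`.  Each `g ∈ Γ` acts as a
homeomorphism of `|Σ_F|`, and for every compact subset `C` of `|Σ_F|` the set
`{g : (g • C) ∩ C ≠ ∅}` is finite; i.e. the action of `Γ` on `|Σ_F|` is proper. -/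
theorem sigmaF_realization_proper_action {Γ : Type*} [Group Γ] (F : Finset Γ)
    (h1 : (1 : Γ) ∈ F) (hinv : ∀ s ∈ F, s⁻¹ ∈ F)
    (act : Γ → (Γ → ℝ) → (Γ → ℝ)) (hact : ∀ g f t, act g f t = f (g⁻¹ * t)) :
    (∀ g : Γ, ∃ e : Realization (SigmaF F) ≃ₜ Realization (SigmaF F),
        ∀ f : Realization (SigmaF F), ((e f : Γ → ℝ)) = act g (f : Γ → ℝ)) ∧
    (∀ C : Set (Γ → ℝ), C ⊆ Realization (SigmaF F) → IsCompact C →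
        {g : Γ | (act g '' C ∩ C).Nonempty}.Finite) := by
  classical
  have hactfun : ∀ g f, act g f = fun t => f (g⁻¹ * t) := fun g f => funext (hact g f)
  constructor
  · intro g
    refine ⟨⟨⟨fun f => ⟨act g f, by rw [hactfun]; exact smul_mem_realization F g f.2⟩,
      fun f => ⟨act g⁻¹ f, by rw [hactfun]; exact smul_mem_realization F g⁻¹ f.2⟩, ?_, ?_⟩,
      ?_, ?_⟩, fun f => rfl⟩
    · intro f
      ext t
      simp only [hact]
      congr 1
      group
    · intro f
      ext t
      simp only [hact]
      congr 1
      group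
    · apply Continuous.subtype_mk
      have : Continuous fun f : Realization (SigmaF F) => (fun t => (f : Γ → ℝ) (g⁻¹ * t)) :=
        continuous_pi fun t => (continuous_apply (g⁻¹ * t)).comp continuous_subtype_val
      convert this using 1
      ext f t
      exact hact g _ t
    · apply Continuous.subtype_mk
      have : Continuous fun f : Realization (SigmaF F) => (fun t => (f : Γ → ℝ) (g⁻¹⁻¹ * t)) :=
        continuous_pi fun t => (continuous_apply (g⁻¹⁻¹ * t)).comp continuous_subtype_val
      convert this using 1
      ext f t
      exact hact g⁻¹ _ t
  · intro C hC hCcomp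
    -- choose a support simplex for each element of C
    have hSex : ∀ f : C, ∃ S : Finset Γ, S ∈ SigmaF F ∧ Function.support (f : Γ → ℝ) = ↑S :=
      fun f => (hC f.2).2.1
    choose Sf hSfK hSfsupp using hSex
    -- open cover of C
    set U : C → Set (Γ → ℝ) := fun f => {h | (1:ℝ)/2 < ∑ t ∈ Sf f, h t} with hUdef
    have hUopen : ∀ f, IsOpen (U f) :=
      fun f => isOpen_lt continuous_const (continuous_finset_sum _ fun t _ => continuous_apply t)
    have hcover : C ⊆ ⋃ f, U f := by
      intro h hh
      refine Set.mem_iUnion.2 ⟨⟨h, hh⟩, ?_⟩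
      have hsum : ∑ᶠ v, h v = 1 := (hC hh).2.2
      have hsupp : Function.support h = ↑(Sf ⟨h, hh⟩) := hSfsupp ⟨h, hh⟩
      have : ∑ᶠ v, h v = ∑ t ∈ Sf ⟨h, hh⟩, h t :=
        finsum_eq_finset_sum_of_support_subset h (by rw [hsupp])
      show (1:ℝ)/2 < ∑ t ∈ Sf ⟨h, hh⟩, h t
      rw [← this, hsum]; norm_num
    obtain ⟨I, hI⟩ := hCcomp.elim_finite_subcover U hUopen hcover
    -- all supports of elements of C are contained in T := (⋃_{f ∈ I} Sf f) * F
    set W : Finset Γ := I.biUnion Sf with hWdef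
    set T : Finset Γ := (W ×ˢ F).image (fun p => p.1 * p.2) with hTdef
    have hsuppT : ∀ h ∈ C, ∀ u : Γ, h u ≠ 0 → u ∈ T := by
      intro h hh u hu
      obtain ⟨f, hfI, hhU'⟩ : ∃ f ∈ I, h ∈ U f := by
        have := hI hh
        simpa only [Set.mem_iUnion, exists_prop] using this
      replace hhU' : (1:ℝ)/2 < ∑ t ∈ Sf f, h t := hhU'
      -- some t ∈ Sf f has h t ≠ 0
      have hex : ∃ t ∈ Sf f, h t ≠ 0 := by
        by_contra hcon
        push_neg at hcon
        have : ∑ t ∈ Sf f, h t = 0 := Finset.sum_eq_zero hcon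
        rw [this] at hhU'
        norm_num at hhU'
      obtain ⟨t, htS, hht⟩ := hex
      -- both t and u are in the support of h, which is a simplex
      obtain ⟨S, ⟨hSne, hSF⟩, hsupp⟩ := (hC hh).2.1
      have htS' : t ∈ S := by
        have : t ∈ Function.support h := hht
        rw [hsupp] at this; exact this
      have huS : u ∈ S := by
        have : u ∈ Function.support h := hu
        rw [hsupp] at this; exact this
      have htF : t⁻¹ * u ∈ F := hSF t htS' u huS
      have htW : t ∈ W := Finset.mem_biUnion.2 ⟨f, hfI, htS⟩
      refine Finset.mem_image.2 ⟨(t, t⁻¹ * u), Finset.mem_product.2 ⟨htW, htF⟩, by group⟩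
    -- conclude
    refine Set.Finite.subset (Finset.finite_toSet ((T ×ˢ T).image fun p => p.1 * p.2⁻¹)) ?_
    intro g hg
    obtain ⟨y, ⟨f, hfC, rfl⟩, hyC⟩ := hg
    -- act g f ∈ C, and its support is nonempty
    obtain ⟨S, ⟨hSne, _⟩, hsupp⟩ := (hC hyC).2.1
    obtain ⟨u, huS⟩ := hSne
    have hu : act g f u ≠ 0 := by
      have : u ∈ Function.support (act g f) := by rw [hsupp]; exact_mod_cast huS
      exact this
    have huT : u ∈ T := hsuppT _ hyC u hu
    have hgu : f (g⁻¹ * u) ≠ 0 := by rwa [hact] at hu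
    have hguT : g⁻¹ * u ∈ T := hsuppT f hfC _ hgu
    have : g = u * (g⁻¹ * u)⁻¹ := by group
    exact Finset.mem_coe.2 (Finset.mem_image.2 ⟨(u, g⁻¹ * u),
      Finset.mem_product.2 ⟨huT, hguT⟩, this.symm⟩)
end

section
/- For every t ∈ [0,1], the elements k_{0,+} := t(h_{0,+} + h_{0,−}) + (1−t)·1, k_{0,−} := 0, k_{1,+} := t(h_{1,+} + h_{1,−}), k_{1,−} := 0, and k_{i,±} := t·h_{i,±} for 2 ≤ i ≤ n, are positive, satisfy k_{i,+}·k_{i,−} = 0 for every i, and ∑_{i=0}^n (k_{i,+} + k_{i,−}) = 1. (This path of relation-preserving tuples implements the homotopy between the endomorphism α₁ and the point evaluation κ₀ of the noncommutative sphere algebra S_n^{nc} in Lemma 3.1(b), which is the key step in proving K_*(S_n^{nc}) ≅ K_*(ℂ), Proposition 3.2.) -/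
/-- Let `h_{i,+}, h_{i,−}` (`0 ≤ i ≤ n`, `n ≥ 1`) be positive elements of a unital
C*-algebra `A` with `h_{i,+} h_{i,−} = 0` and `∑ (h_{i,+} + h_{i,−}) = 1` (the defining
relations of the noncommutative sphere algebra `S_n^{nc}`).  For every `t ∈ [0,1]`, the
elements `k_{0,+} = t(h_{0,+} + h_{0,−}) + (1−t)·1`, `k_{1,+} = t(h_{1,+} + h_{1,−})`,
`k_{i,+} = t·h_{i,+}` for `i ≥ 2`, and `k_{0,−} = k_{1,−} = 0`, `k_{i,−} = t·h_{i,−}`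
for `i ≥ 2`, again satisfy the same relations: they are positive, `k_{i,+} k_{i,−} = 0`,
and `∑ (k_{i,+} + k_{i,−}) = 1`. -/
theorem homotopy_relations_preserved {A : Type*} [CStarAlgebra A]
    [PartialOrder A] [StarOrderedRing A] (n : ℕ) (hn : 1 ≤ n)
    (hp hm : Fin (n + 1) → A)
    (hppos : ∀ i, 0 ≤ hp i) (hmpos : ∀ i, 0 ≤ hm i)
    (horth : ∀ i, hp i * hm i = 0) (hsum : ∑ i, (hp i + hm i) = 1)
    (t : ℝ) (ht : t ∈ Set.Icc (0 : ℝ) 1)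
    (kp km : Fin (n + 1) → A)
    (hkp0 : kp 0 = t • (hp 0 + hm 0) + (1 - t) • (1 : A))
    (hkp1 : kp 1 = t • (hp 1 + hm 1))
    (hkpi : ∀ i, i ≠ 0 → i ≠ 1 → kp i = t • hp i)
    (hkm0 : km 0 = 0) (hkm1 : km 1 = 0)
    (hkmi : ∀ i, i ≠ 0 → i ≠ 1 → km i = t • hm i) :
    (∀ i, 0 ≤ kp i) ∧ (∀ i, 0 ≤ km i) ∧ (∀ i, kp i * km i = 0) ∧
      ∑ i, (kp i + km i) = 1 := by
  obtain ⟨ht0, ht1⟩ := ht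
  have ht1' : (0:ℝ) ≤ 1 - t := by linarith
  have hone : (0:A) ≤ 1 := zero_le_one
  refine ⟨?_, ?_, ?_, ?_⟩
  · intro i
    by_cases h0 : i = 0
    · rw [h0, hkp0]
      exact add_nonneg (smul_nonneg ht0 (add_nonneg (hppos 0) (hmpos 0)))
        (smul_nonneg ht1' hone)
    by_cases h1 : i = 1
    · rw [h1, hkp1]
      exact smul_nonneg ht0 (add_nonneg (hppos 1) (hmpos 1))
    · rw [hkpi i h0 h1]; exact smul_nonneg ht0 (hppos i)
  · intro i
    by_cases h0 : i = 0
    · rw [h0, hkm0]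
    by_cases h1 : i = 1
    · rw [h1, hkm1]
    · rw [hkmi i h0 h1]; exact smul_nonneg ht0 (hmpos i)
  · intro i
    by_cases h0 : i = 0
    · rw [h0, hkm0, mul_zero]
    by_cases h1 : i = 1
    · rw [h1, hkm1, mul_zero]
    · rw [hkpi i h0 h1, hkmi i h0 h1, smul_mul_smul_comm, horth i, smul_zero]
  · have key : ∀ i, kp i + km i = t • (hp i + hm i)
        + (if i = 0 then (1 - t) • (1 : A) else 0) := by
      intro i
      by_cases h0 : i = 0
      · simp [h0, hkp0, hkm0]
      by_cases h1 : i = 1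
      · have h10 : (1 : Fin (n+1)) ≠ 0 := by
          have hv : (1 : Fin (n+1)).val = 1 := by
            simp [Fin.val_one, Nat.mod_eq_of_lt (show 1 < n + 1 by omega)]
          intro h; rw [h] at hv; simp at hv
        simp [h1, hkp1, hkm1, h10]
      · simp [hkpi i h0 h1, hkmi i h0 h1, h0, smul_add]
    simp only [key, Finset.sum_add_distrib, ← Finset.smul_sum, hsum,
      Finset.sum_ite_eq', Finset.mem_univ, if_true, smul_eq_mul]
    module
end
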